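/- arXiv:2603.27495 — 5 statements merged into one kernel-verified Lean document; each statement's English description precedes it below -/
import Mathlib

section
/- Let K ≥ 2 be an integer and let R > 1 and ζ > 1 be reals. Set η_H := 1/(R^K + R^{-K}), a := ζR + ζ⁻¹R⁻¹, b := R + R⁻¹, and define F : ℝ → ℝ by F(ω) := ((2cos ω − a)/(2cos ω − b))·(1 − 2η_H cos(Kω)). If K² < (1/η_H)·((a − b)(1 − 2η_H))/((a − 2cos(π/K))·(b − 2cos(π/K))), then F(ω) ≤ F(0) for every ω ∈ [0, 2π); that is, ω = 0 is a global maximizer of F on [0, 2π). -/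
/-!
Put `c = cos ω` and `d = cos (K ω)`. Clearing the positive denominators `b - 2c` and `b - 2`,
`F ω ≤ F 0` becomes `η_H (1 - d)(a - 2c)(b - 2) ≤ (a - b)(1 - 2η_H)(1 - c)`. The factor
`(1 - d)(a - 2c)` is at most `K² (1 - c)(a - 2 cos (π/K))`: for `c ≥ cos (π/K)` this follows
from `1 - cos (K ω) ≤ K² (1 - cos ω)`, and for smaller `c` from `1 - d ≤ 2` together with
`K² (1 - cos (π/K)) ≥ 2`. The hypothesis on `K²` is exactly what then closes the inequality.
-/

open Real

lemma abs_sin_nat_mul_le (n : ℕ) (x : ℝ) : |sin (n * x)| ≤ n * |sin x| := by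
  induction n with
  | zero => simp
  | succ n ih =>
    rw [Nat.cast_succ, add_mul, one_mul, sin_add]
    calc |sin (n * x) * cos x + cos (n * x) * sin x|
        ≤ |sin (n * x)| * |cos x| + |cos (n * x)| * |sin x| := by
          rw [← abs_mul, ← abs_mul]; exact abs_add_le _ _
      _ ≤ |sin (n * x)| * 1 + 1 * |sin x| := by
          gcongr <;> exact abs_cos_le_one _
      _ ≤ (n + 1) * |sin x| := by linarith

lemma one_sub_cos_eq_two_mul_sin_sq (x : ℝ) : 1 - cos x = 2 * sin (x / 2) ^ 2 := by
  rw [sin_sq_eq_half_sub, mul_div_cancel₀ x two_ne_zero]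
  ring

lemma one_sub_cos_nat_mul_le (n : ℕ) (x : ℝ) : 1 - cos (n * x) ≤ n ^ 2 * (1 - cos x) := by
  rw [one_sub_cos_eq_two_mul_sin_sq, one_sub_cos_eq_two_mul_sin_sq, mul_div_assoc]
  have h : sin (n * (x / 2)) ^ 2 ≤ (n * |sin (x / 2)|) ^ 2 := by
    rw [← sq_abs]
    exact pow_le_pow_left₀ (abs_nonneg _) (abs_sin_nat_mul_le n _) 2
  rw [mul_pow, sq_abs] at h
  linarith

lemma two_le_sq_mul_one_sub_cos_pi_div {K : ℕ} (hK : K ≠ 0) :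
    2 ≤ (K : ℝ) ^ 2 * (1 - cos (π / K)) := by
  have hK1 : (1 : ℝ) ≤ K := by exact_mod_cast Nat.one_le_iff_ne_zero.2 hK
  have hle : |π / K| ≤ π := by
    rw [abs_of_nonneg (by positivity)]
    exact div_le_self pi_pos.le hK1
  have h := cos_le_one_sub_mul_cos_sq hle
  have hπ : π ≠ 0 := pi_ne_zero
  have hK0 : (K : ℝ) ≠ 0 := by positivity
  calc (2 : ℝ) = K ^ 2 * (2 / π ^ 2 * (π / K) ^ 2) := by field_simp
    _ ≤ K ^ 2 * (1 - cos (π / K)) := by gcongr; linarith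

lemma one_sub_cos_nat_mul_mul_le {K : ℕ} (hK : 2 ≤ K) {a : ℝ} (ha : 2 ≤ a) (ω : ℝ) :
    (1 - cos (K * ω)) * (a - 2 * cos ω) ≤ K ^ 2 * (1 - cos ω) * (a - 2 * cos (π / K)) := by
  set c := cos ω
  set p := cos (π / K)
  have hc : -1 ≤ c := neg_one_le_cos ω
  have hc1 : c ≤ 1 := cos_le_one ω
  have hd : -1 ≤ cos (K * ω) := neg_one_le_cos _
  have hp1 : p ≤ 1 := cos_le_one _
  have hKp : 2 ≤ (K : ℝ) ^ 2 * (1 - p) := two_le_sq_mul_one_sub_cos_pi_div (by omega)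
  have hK4 : (4 : ℝ) ≤ K ^ 2 := by
    have : (2 : ℝ) ≤ K := by exact_mod_cast hK
    nlinarith
  rcases le_or_gt p c with hpc | hcp
  · exact mul_le_mul (one_sub_cos_nat_mul_le K ω) (by linarith) (by linarith)
      (mul_nonneg (by positivity) (by linarith))
  · -- `K² (1 - c)(a - 2p) - 2(a - 2c)` is affine in `c`, and nonnegative at `c = p` and `c = -1`.
    have hatp : 0 ≤ ((K : ℝ) ^ 2 * (1 - p) - 2) * (a - 2 * p) :=
      mul_nonneg (by linarith) (by linarith)
    have hatm1 : 0 ≤ 2 * (K : ℝ) ^ 2 * (a - 2 * p) - 2 * a - 4 := by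
      nlinarith [mul_le_mul_of_nonneg_right hK4 (show (0 : ℝ) ≤ a - 2 by linarith)]
    calc (1 - cos (K * ω)) * (a - 2 * c) ≤ 2 * (a - 2 * c) :=
          mul_le_mul_of_nonneg_right (by linarith) (by linarith)
      _ ≤ K ^ 2 * (1 - c) * (a - 2 * p) := by
          nlinarith [mul_nonneg (show (0 : ℝ) ≤ p - c by linarith) hatm1,
            mul_nonneg (show (0 : ℝ) ≤ c + 1 by linarith) hatp]

lemma div_mul_le_div_mul_of_le {a b c d η : ℝ} (hb : 2 < b) (hc : c ≤ 1)
    (h : η * ((1 - d) * (a - 2 * c) * (b - 2)) ≤ (a - b) * (1 - 2 * η) * (1 - c)) :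
    (2 * c - a) / (2 * c - b) * (1 - 2 * η * d) ≤ (2 - a) / (2 - b) * (1 - 2 * η) := by
  rw [← neg_div_neg_eq, ← neg_div_neg_eq (2 - a), div_mul_eq_mul_div, div_mul_eq_mul_div,
    div_le_div_iff₀ (by linarith) (by linarith)]
  linear_combination 2 * h

lemma two_lt_add_inv_self {x : ℝ} (hx : 1 < x) : 2 < x + x⁻¹ := by
  have hx0 : 0 < x := by linarith
  have : x + x⁻¹ - 2 = (x - 1) ^ 2 / x := by field_simp; ring
  have : 0 < (x - 1) ^ 2 / x := by apply div_pos <;> nlinarith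
  linarith

lemma add_inv_lt_mul_add_inv_mul {R ζ : ℝ} (hR : 1 < R) (hζ : 1 < ζ) :
    R + R⁻¹ < ζ * R + ζ⁻¹ * R⁻¹ := by
  have hR0 : 0 < R := by linarith
  have hζ0 : 0 < ζ := by linarith
  have hlt : ζ⁻¹ * R⁻¹ < R := by
    rw [← mul_inv, inv_lt_comm₀ (by positivity) hR0]
    nlinarith [inv_lt_one_of_one_lt₀ hR]
  have : ζ * R + ζ⁻¹ * R⁻¹ - (R + R⁻¹) = (ζ - 1) * (R - ζ⁻¹ * R⁻¹) := by field_simp; ring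
  nlinarith [mul_pos (sub_pos.2 hζ) (sub_pos.2 hlt)]

/-- Proposition 1: under the sufficient condition on `K², R, ζ`, the point `ω = 0`
is a global maximizer of `F` over `[0, 2π)`. -/
theorem stmt_0 (K : ℕ) (hK : 2 ≤ K) (R ζ : ℝ) (hR : 1 < R) (hζ : 1 < ζ)
    (ηH a b : ℝ)
    (hηH : ηH = 1 / (R ^ K + R⁻¹ ^ K))
    (ha : a = ζ * R + ζ⁻¹ * R⁻¹)
    (hb : b = R + R⁻¹)
    (F : ℝ → ℝ)
    (hF : ∀ ω : ℝ, F ω =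
      ((2 * Real.cos ω - a) / (2 * Real.cos ω - b)) * (1 - 2 * ηH * Real.cos (K * ω)))
    (hcond : (K : ℝ) ^ 2 <
      (1 / ηH) * ((a - b) * (1 - 2 * ηH)) /
        ((a - 2 * Real.cos (π / K)) * (b - 2 * Real.cos (π / K)))) :
    ∀ ω ∈ Set.Ico (0 : ℝ) (2 * π), F ω ≤ F 0 := by
  intro ω _
  have hb2 : 2 < b := hb ▸ two_lt_add_inv_self hR
  have hab : b < a := ha ▸ hb ▸ add_inv_lt_mul_add_inv_mul hR hζ
  have hη : 0 < ηH := by rw [hηH]; positivity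
  have hp := cos_le_one (π / K)
  rw [lt_div_iff₀ (mul_pos (by linarith) (by linarith)), one_div, inv_mul_eq_div, lt_div_iff₀ hη] at hcond
  have hc := cos_le_one ω
  rw [hF, hF, mul_zero, cos_zero, mul_one, mul_one]
  refine div_mul_le_div_mul_of_le hb2 hc ?_
  have hkey := one_sub_cos_nat_mul_mul_le hK (hb2.trans hab).le ω
  calc ηH * ((1 - cos (K * ω)) * (a - 2 * cos ω) * (b - 2))
      ≤ ηH * (K ^ 2 * (1 - cos ω) * (a - 2 * cos (π / K)) * (b - 2 * cos (π / K))) := by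
        gcongr ηH * ?_
        exact mul_le_mul hkey (by linarith) (by linarith)
          (mul_nonneg (mul_nonneg (by positivity) (by linarith)) (by linarith))
    _ = K ^ 2 * ((a - 2 * cos (π / K)) * (b - 2 * cos (π / K))) * ηH * (1 - cos ω) := by ring
    _ ≤ (a - b) * (1 - 2 * ηH) * (1 - cos ω) := by gcongr
end

section
/- Let K ≥ 1 be an integer, let ρ_0, …, ρ_{K−1} > 0 and ψ_0, …, ψ_{K−1} ∈ ℝ. For a bit vector b ∈ {0,1}^K, define zeros α_k(b) := ρ_k·e^{iψ_k} if b_k = 1 and α_k(b) := ρ_k^{-1}·e^{iψ_k} if b_k = 0, and let X_b(z) := c_b·∏_{k=0}^{K−1}(z − α_k(b)), where c_b > 0 is the unique positive real such that the sum of the squared moduli of the K+1 coefficients of X_b equals K + 1. Then for any two bit vectors b, b′ ∈ {0,1}^K and every ω ∈ ℝ, one has |X_b(e^{iω})| = |X_{b′}(e^{iω})|. -/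
/-!
On the unit circle `‖z - α‖ = ‖α‖ * ‖z - (conj α)⁻¹‖`, so replacing zeros by their conjugate
reciprocals multiplies the modulus of a polynomial on the circle by a constant `μ ≥ 0`. By
Parseval, the coefficient energy is the mean of the squared modulus over the circle, so it gets
multiplied by `μ ^ 2`; since both codewords have energy `K + 1`, the constant is `1`.
-/

open Polynomial Complex ComplexConjugate Metric

theorem norm_sub_eq_norm_mul_norm_sub_inv_conj {z f : ℂ} (hz : ‖z‖ = 1) (hf : f ≠ 0) :
    ‖z - f‖ = ‖f‖ * ‖z - (conj f)⁻¹‖ := by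
  have hzz : conj z * z = 1 := by
    rw [mul_comm, mul_conj, normSq_eq_norm_sq, hz]; norm_num
  calc ‖z - f‖ = ‖z‖ * ‖conj (f - z)‖ := by rw [hz, one_mul, RCLike.norm_conj, norm_sub_rev]
    _ = ‖conj f * z - 1‖ := by
        rw [← norm_mul, map_sub, ← hzz]; ring_nf
    _ = ‖f‖ * ‖z - (conj f)⁻¹‖ := by
        rw [← RCLike.norm_conj f, ← norm_mul, mul_sub, mul_inv_cancel₀ (by simpa using hf)]

theorem exists_norm_sub_eq_mul_norm_sub {f g : ℂ} (h : g = f ∨ g = (conj f)⁻¹) :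
    ∃ r ≥ 0, ∀ z ∈ sphere (0 : ℂ) 1, ‖z - f‖ = r * ‖z - g‖ := by
  by_cases hf : f = 0
  · -- `(conj 0)⁻¹ = 0`, so both alternatives say `g = 0`.
    have hg : g = f := by simpa [hf] using h
    exact ⟨1, zero_le_one, fun z _ => by rw [hg, one_mul]⟩
  rcases h with rfl | rfl
  · exact ⟨1, zero_le_one, fun z _ => by rw [one_mul]⟩
  · exact ⟨‖f‖, norm_nonneg f, fun z hz =>
      norm_sub_eq_norm_mul_norm_sub_inv_conj (mem_sphere_zero_iff_norm.1 hz) hf⟩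

theorem exists_norm_eval_prod_eq_mul {ι : Type*} (s : Finset ι) {f g : ι → ℂ}
    (h : ∀ k, g k = f k ∨ g k = (conj (f k))⁻¹) :
    ∃ μ ≥ 0, ∀ z ∈ sphere (0 : ℂ) 1,
      ‖(∏ k ∈ s, (X - C (f k))).eval z‖ = μ * ‖(∏ k ∈ s, (X - C (g k))).eval z‖ := by
  choose r hr0 hr using fun k => exists_norm_sub_eq_mul_norm_sub (h k)
  refine ⟨∏ k ∈ s, r k, Finset.prod_nonneg fun k _ => hr0 k, fun z hz => ?_⟩
  simp only [eval_prod, eval_sub, eval_X, eval_C, norm_prod, ← Finset.prod_mul_distrib,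
    hr _ z hz]

theorem sum_range_sq_norm_coeff {P : ℂ[X]} {N : ℕ} (hP : P.natDegree < N) :
    ∑ i ∈ Finset.range N, ‖P.coeff i‖ ^ 2 = ∑ i ∈ P.support, ‖P.coeff i‖ ^ 2 := by
  rw [← sum_def (f := fun _ a => ‖a‖ ^ 2), sum_over_range' _ (by simp) N hP]

theorem sum_sq_norm_coeff_eq_of_norm_eval_eq_mul {P Q : ℂ[X]} {μ : ℝ}
    (h : ∀ z ∈ sphere (0 : ℂ) 1, ‖P.eval z‖ = μ * ‖Q.eval z‖) :
    ∑ i ∈ P.support, ‖P.coeff i‖ ^ 2 = μ ^ 2 * ∑ i ∈ Q.support, ‖Q.coeff i‖ ^ 2 := by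
  rw [sum_sq_norm_coeff_eq_circleAverage, sum_sq_norm_coeff_eq_circleAverage, ← smul_eq_mul,
    ← Real.circleAverage_fun_smul]
  refine Real.circleAverage_congr_sphere fun z hz => ?_
  simp only [abs_one] at hz
  simp only [h z hz, mul_pow, smul_eq_mul]

theorem norm_eval_eq_of_sum_sq_norm_coeff_eq {P Q R : ℂ[X]} {a b : ℝ} (ha : 0 ≤ a) (hb : 0 ≤ b)
    (hP : ∀ z ∈ sphere (0 : ℂ) 1, ‖P.eval z‖ = a * ‖R.eval z‖)
    (hQ : ∀ z ∈ sphere (0 : ℂ) 1, ‖Q.eval z‖ = b * ‖R.eval z‖)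
    (hE : ∑ i ∈ P.support, ‖P.coeff i‖ ^ 2 = ∑ i ∈ Q.support, ‖Q.coeff i‖ ^ 2)
    (hE0 : ∑ i ∈ Q.support, ‖Q.coeff i‖ ^ 2 ≠ 0) :
    ∀ z ∈ sphere (0 : ℂ) 1, ‖P.eval z‖ = ‖Q.eval z‖ := by
  rw [sum_sq_norm_coeff_eq_of_norm_eval_eq_mul hP, sum_sq_norm_coeff_eq_of_norm_eval_eq_mul hQ]
    at hE
  rw [sum_sq_norm_coeff_eq_of_norm_eval_eq_mul hQ] at hE0
  have hab : a = b := (pow_left_inj₀ ha hb two_ne_zero).1 <|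
    mul_right_cancel₀ (right_ne_zero_of_mul hE0) hE
  intro z hz
  rw [hP z hz, hQ z hz, hab]

theorem inv_conj_ofReal_mul_exp (r ψ : ℝ) :
    (conj ((r : ℂ) * exp (I * ψ)))⁻¹ = (r : ℂ)⁻¹ * exp (I * ψ) := by
  rw [map_mul, conj_ofReal, ← exp_conj, map_mul, conj_I, conj_ofReal, mul_inv, ← exp_neg]
  ring_nf

noncomputable def bmoczZero (ρ ψ : ℝ) (bit : Bool) : ℂ :=
  (if bit then (ρ : ℂ) else (ρ : ℂ)⁻¹) * exp (I * ψ)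

theorem bmoczZero_not (ρ ψ : ℝ) (bit : Bool) :
    bmoczZero ρ ψ (!bit) = (conj (bmoczZero ρ ψ bit))⁻¹ := by
  cases bit
  · simp only [bmoczZero, Bool.not_false, if_true, Bool.false_eq_true, if_false]
    rw [← ofReal_inv, inv_conj_ofReal_mul_exp, ofReal_inv, inv_inv]
  · exact (inv_conj_ofReal_mul_exp ρ ψ).symm

theorem bmoczZero_eq_or_eq_inv_conj (ρ ψ : ℝ) (bit bit' : Bool) :
    bmoczZero ρ ψ bit' = bmoczZero ρ ψ bit ∨
      bmoczZero ρ ψ bit' = (conj (bmoczZero ρ ψ bit))⁻¹ := by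
  rcases Bool.eq_or_eq_not bit' bit with rfl | rfl
  · exact Or.inl rfl
  · exact Or.inr (bmoczZero_not ρ ψ bit)

theorem stmt_9_general (K : ℕ) (ρ ψ : Fin K → ℝ)
    (b b' : Fin K → Bool) (c c' : ℝ)
    (X X' : Polynomial ℂ)
    (hX : X = Polynomial.C (c : ℂ) * ∏ k : Fin K,
      (Polynomial.X - Polynomial.C
        ((if b k then (ρ k : ℂ) else (ρ k : ℂ)⁻¹) * Complex.exp (Complex.I * (ψ k)))))
    (hX' : X' = Polynomial.C (c' : ℂ) * ∏ k : Fin K,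
      (Polynomial.X - Polynomial.C
        ((if b' k then (ρ k : ℂ) else (ρ k : ℂ)⁻¹) * Complex.exp (Complex.I * (ψ k)))))
    (hE : ∑ j ∈ Finset.range (K + 1), ‖X.coeff j‖ ^ 2 = (K : ℝ) + 1)
    (hE' : ∑ j ∈ Finset.range (K + 1), ‖X'.coeff j‖ ^ 2 = (K : ℝ) + 1) :
    ∀ ω : ℝ, ‖X.eval (Complex.exp (Complex.I * ω))‖ =
      ‖X'.eval (Complex.exp (Complex.I * ω))‖ := by
  obtain ⟨μ, hμ, hR⟩ := exists_norm_eval_prod_eq_mul Finset.univ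
    fun k => bmoczZero_eq_or_eq_inv_conj (ρ k) (ψ k) (b k) (b' k)
  have hXR (z) (hz : z ∈ sphere (0 : ℂ) 1) : ‖X.eval z‖ = ‖c‖ * μ *
      ‖(∏ k, (Polynomial.X - C (bmoczZero (ρ k) (ψ k) (b' k)))).eval z‖ := by
    rw [hX, eval_mul, eval_C, norm_mul, norm_real, mul_assoc]
    exact congrArg _ (hR z hz)
  have hX'R (z) (_ : z ∈ sphere (0 : ℂ) 1) : ‖X'.eval z‖ =
      ‖c'‖ * ‖(∏ k, (Polynomial.X - C (bmoczZero (ρ k) (ψ k) (b' k)))).eval z‖ := by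
    rw [hX', eval_mul, eval_C, norm_mul, norm_real]
    rfl
  have hdeg (d : ℂ) (β : Fin K → Bool) :
      (C d * ∏ k, (Polynomial.X - C (bmoczZero (ρ k) (ψ k) (β k)))).natDegree < K + 1 :=
    Nat.lt_succ_of_le <| (natDegree_C_mul_le _ _).trans (by simp)
  rw [sum_range_sq_norm_coeff (hX ▸ hdeg c b)] at hE
  rw [sum_range_sq_norm_coeff (hX' ▸ hdeg c' b')] at hE'
  intro ω
  exact norm_eval_eq_of_sum_sq_norm_coeff_eq (by positivity) (norm_nonneg _) hXR hX'R
    (hE.trans hE'.symm) (by rw [hE']; positivity) _ (by simp)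

/-- The template transform is common to the whole BMOCZ codebook: any two codewords
(energy-normalized polynomials whose zeros are selected by bit vectors from
conjugate-reciprocal pairs `{ρ_k e^{iψ_k}, ρ_k⁻¹ e^{iψ_k}}`) have the same
magnitude on the unit circle. -/
theorem stmt_9 (K : ℕ) (hK : 1 ≤ K) (ρ ψ : Fin K → ℝ) (hρ : ∀ k, 0 < ρ k)
    (b b' : Fin K → Bool) (c c' : ℝ) (hc : 0 < c) (hc' : 0 < c')
    (X X' : Polynomial ℂ)
    (hX : X = Polynomial.C (c : ℂ) * ∏ k : Fin K,
      (Polynomial.X - Polynomial.C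
        ((if b k then (ρ k : ℂ) else (ρ k : ℂ)⁻¹) * Complex.exp (Complex.I * (ψ k)))))
    (hX' : X' = Polynomial.C (c' : ℂ) * ∏ k : Fin K,
      (Polynomial.X - Polynomial.C
        ((if b' k then (ρ k : ℂ) else (ρ k : ℂ)⁻¹) * Complex.exp (Complex.I * (ψ k)))))
    (hE : ∑ j ∈ Finset.range (K + 1), ‖X.coeff j‖ ^ 2 = (K : ℝ) + 1)
    (hE' : ∑ j ∈ Finset.range (K + 1), ‖X'.coeff j‖ ^ 2 = (K : ℝ) + 1) :
    ∀ ω : ℝ, ‖X.eval (Complex.exp (Complex.I * ω))‖ =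
      ‖X'.eval (Complex.exp (Complex.I * ω))‖ :=
  stmt_9_general K ρ ψ b b' c c' X X' hX hX' hE hE'
end

section
/- Let K ≥ 1 be an integer and R > 1 a real, and set η_H := 1/(R^K + R^{-K}). For a bit vector b ∈ {0,1}^K, define zeros α_k(b) := R·e^{2πik/K} if b_k = 1 and α_k(b) := R^{-1}·e^{2πik/K} if b_k = 0, and let X_b(z) := c_b·∏_{k=0}^{K−1}(z − α_k(b)), where c_b > 0 is the unique positive real such that the sum of the squared moduli of the K+1 coefficients of X_b equals K + 1. Then for every ω ∈ ℝ, |X_b(e^{iω})|² = (K + 1)·(1 − 2η_H·cos(Kω)). -/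
/-!
On the unit circle a zero `R⁻¹ w` (with `‖w‖ = 1`) contributes `R⁻¹` times what the mirrored zero
`R w` contributes, so `|X_b(z)|² = D |z^K - R^K|² = D (1 + R^{2K} - 2 R^K cos Kω)` for a constant
`D` depending on `b` and `c`. The energy normalisation pins down `D`: the coefficient energy of a
polynomial `p` of degree `≤ n` is the middle coefficient of `p(z) · zⁿ conj(p(1/z̄))`, a polynomial
that agrees with `zⁿ |p(z)|²` on the unit circle, so it is read off the constant term
`D (1 + R^{2K})` of the trigonometric polynomial `|X_b(e^{iω})|²`.
-/

open Polynomial Real ComplexConjugate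

namespace Complex

theorem infinite_range_exp_I_mul : (Set.range fun ω : ℝ => exp (I * ω)).Infinite := by
  refine Set.Infinite.of_image re ?_
  rw [← Set.range_comp]
  convert Set.Icc_infinite (show (-1 : ℝ) < 1 by norm_num)
  rw [← Real.range_cos]
  congr 1
  ext ω
  simp [mul_comm I, exp_ofReal_mul_I_re]

theorem norm_sub_inv_mul_of_norm_eq_one {z w : ℂ} (hz : ‖z‖ = 1) (hw : ‖w‖ = 1) {r : ℝ}
    (hr : 0 < r) : ‖z - (r : ℂ)⁻¹ * w‖ = r⁻¹ * ‖z - r * w‖ := by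
  have hz1 : z * conj z = 1 := by simp [mul_conj', hz]
  have hw1 : w * conj w = 1 := by simp [mul_conj', hw]
  have hr0 : (r : ℂ) ≠ 0 := ofReal_ne_zero.mpr hr.ne'
  have hrefl : z - (r : ℂ)⁻¹ * w = -(r : ℂ)⁻¹ * z * w * conj (z - r * w) := by
    rw [map_sub, map_mul, conj_ofReal]
    field_simp
    linear_combination (-r * z) * hw1 + w * hz1
  rw [hrefl, norm_mul, norm_conj, norm_mul, norm_mul, norm_neg, norm_inv, hz, hw, norm_real,
    Real.norm_of_nonneg hr.le, mul_one, mul_one]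

theorem prod_sub_mul_exp_eq {n : ℕ} (hn : n ≠ 0) (a u : ℂ) :
    ∏ k : Fin n, (u - a * exp (2 * π * I * k / n)) = u ^ n - a ^ n := by
  have h := congrArg (eval u)
    (X_pow_sub_C_eq_prod (isPrimitiveRoot_exp n hn) (Nat.pos_of_ne_zero hn) (rfl : a ^ n = a ^ n))
  simp only [eval_sub, eval_pow, eval_X, eval_C, eval_prod] at h
  rw [h, ← Fin.prod_univ_eq_prod_range]
  refine Finset.prod_congr rfl fun k _ => ?_
  rw [← exp_nat_mul]
  ring_nf

theorem sq_norm_exp_sub_ofReal (θ r : ℝ) :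
    ‖exp (I * θ) - r‖ ^ 2 = 1 + r ^ 2 - 2 * r * Real.cos θ := by
  rw [mul_comm, Complex.sq_norm, normSq_apply]
  simp only [sub_re, sub_im, exp_ofReal_mul_I_re, exp_ofReal_mul_I_im, ofReal_re, ofReal_im]
  linear_combination Real.sin_sq_add_cos_sq θ

end Complex

namespace Polynomial

theorem eval_reflect_map_conj {p : ℂ[X]} {n : ℕ} (hp : p.natDegree ≤ n) {z : ℂ}
    (hz : ‖z‖ = 1) : (reflect n (p.map (starRingEnd ℂ))).eval z = z ^ n * conj (p.eval z) := by
  have hz1 : z * conj z = 1 := by simp [Complex.mul_conj', hz]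
  let _ : Invertible (conj z) := ⟨z, hz1, mul_comm z (conj z) ▸ hz1⟩
  have h := eval₂_reflect_mul_pow (RingHom.id ℂ) (conj z) n (p.map (starRingEnd ℂ))
    (natDegree_map_le.trans hp)
  change eval z _ * _ = eval (conj z) _ at h
  rw [eval_map_apply] at h
  rw [← h, mul_comm, mul_assoc, ← mul_pow, mul_comm _ z, hz1, one_pow, mul_one]

theorem coeff_mul_reflect_map_conj (p : ℂ[X]) (n : ℕ) :
    (p * reflect n (p.map (starRingEnd ℂ))).coeff n =
      ∑ j ∈ Finset.range (n + 1), (‖p.coeff j‖ ^ 2 : ℝ) := by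
  rw [coeff_mul, Finset.Nat.sum_antidiagonal_eq_sum_range_succ_mk]
  push_cast
  refine Finset.sum_congr rfl fun j hj => ?_
  rw [coeff_reflect, revAt_le (Nat.sub_le n j),
    Nat.sub_sub_self (Finset.mem_range_succ_iff.mp hj), coeff_map, Complex.mul_conj']

theorem sum_sq_norm_coeff_eq_of_sq_norm_eval_exp {p : ℂ[X]} {n : ℕ} (hn : n ≠ 0)
    (hp : p.natDegree ≤ n) {A B : ℝ}
    (h : ∀ ω : ℝ, ‖p.eval (Complex.exp (Complex.I * ω))‖ ^ 2 = A - 2 * B * Real.cos (n * ω)) :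
    ∑ j ∈ Finset.range (n + 1), ‖p.coeff j‖ ^ 2 = A := by
  have hS : p * reflect n (p.map (starRingEnd ℂ)) =
      C (A : ℂ) * X ^ n - C (B : ℂ) * (X ^ (2 * n) + 1) := by
    refine eq_of_infinite_eval_eq _ _ (Complex.infinite_range_exp_I_mul.mono ?_)
    rintro _ ⟨ω, rfl⟩
    have hz : ‖Complex.exp (Complex.I * ω)‖ = 1 := by simp [Complex.norm_exp]
    have hcos : 2 * (Real.cos (n * ω) : ℂ) * Complex.exp (Complex.I * ω) ^ n =
        Complex.exp (Complex.I * ω) ^ (2 * n) + 1 := by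
      rw [Complex.ofReal_cos, Complex.two_cos, ← Complex.exp_nat_mul, ← Complex.exp_nat_mul,
        add_mul, ← Complex.exp_add, ← Complex.exp_add]
      push_cast
      ring_nf
      simp [add_comm]
    simp only [Set.mem_ofPred_eq, eval_mul, eval_reflect_map_conj hp hz, eval_sub, eval_C,
      eval_pow, eval_X, eval_add, eval_one]
    rw [mul_left_comm, Complex.mul_conj', ← Complex.ofReal_pow, h]
    push_cast at hcos ⊢
    linear_combination (-(B : ℂ)) * hcos
  rw [← Complex.ofReal_inj, ← coeff_mul_reflect_map_conj, hS]
  simp [coeff_X_pow, hn, coeff_one]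

end Polynomial

open Complex in
theorem sq_norm_eval_C_mul_prod_sub_exp {K : ℕ} (hK : K ≠ 0) {R : ℝ} (hR : 0 < R)
    (b : Fin K → Bool) (c ω : ℝ) :
    ‖(C (c : ℂ) * ∏ k : Fin K, (X - C ((if b k then (R : ℂ) else (R : ℂ)⁻¹) *
        exp (2 * π * I * k / K)))).eval (exp (I * ω))‖ ^ 2 =
      (c ^ 2 * ∏ k : Fin K, if b k then 1 else R⁻¹ ^ 2) *
        (1 + R ^ K * R ^ K - 2 * R ^ K * Real.cos (K * ω)) := by
  have hz : ‖exp (I * ω)‖ = 1 := by simp [norm_exp]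
  have hfactor : ∀ k : Fin K,
      ‖exp (I * ω) - (if b k then (R : ℂ) else (R : ℂ)⁻¹) * exp (2 * π * I * k / K)‖ ^ 2 =
        (if b k then 1 else R⁻¹ ^ 2) * ‖exp (I * ω) - R * exp (2 * π * I * k / K)‖ ^ 2 := by
    intro k
    have hw : ‖exp (2 * π * I * k / K)‖ = 1 := by simp [norm_exp]
    cases b k
    · rw [if_neg Bool.false_ne_true, if_neg Bool.false_ne_true,
        norm_sub_inv_mul_of_norm_eq_one hz hw hR, mul_pow]
    · rw [if_pos rfl, if_pos rfl, one_mul]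
  have hpow : exp (I * ω) ^ K = exp (I * (K * ω : ℝ)) := by
    rw [← Complex.exp_nat_mul]
    push_cast
    ring_nf
  simp only [eval_mul, eval_C, eval_prod, eval_sub, eval_X, norm_mul, norm_prod, mul_pow,
    ← Finset.prod_pow, hfactor, Finset.prod_mul_distrib, norm_real, Real.norm_eq_abs, sq_abs]
  rw [Finset.prod_pow, ← norm_prod, prod_sub_mul_exp_eq hK, hpow, ← ofReal_pow,
    sq_norm_exp_sub_ofReal]
  ring

theorem stmt_10_general (K : ℕ) (hK : 1 ≤ K) (R : ℝ) (hR : 1 < R)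
    (ηH : ℝ) (hηH : ηH = 1 / (R ^ K + R⁻¹ ^ K))
    (b : Fin K → Bool) (c : ℝ)
    (X : Polynomial ℂ)
    (hX : X = Polynomial.C (c : ℂ) * ∏ k : Fin K,
      (Polynomial.X - Polynomial.C
        ((if b k then (R : ℂ) else (R : ℂ)⁻¹) *
          Complex.exp (2 * π * Complex.I * k / K))))
    (hE : ∑ j ∈ Finset.range (K + 1), ‖X.coeff j‖ ^ 2 = (K : ℝ) + 1) :
    ∀ ω : ℝ, ‖X.eval (Complex.exp (Complex.I * ω))‖ ^ 2 =
      ((K : ℝ) + 1) * (1 - 2 * ηH * Real.cos (K * ω)) := by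
  have hK0 : K ≠ 0 := Nat.one_le_iff_ne_zero.mp hK
  have hR0 : 0 < R := zero_lt_one.trans hR
  set D := c ^ 2 * ∏ k : Fin K, if b k then 1 else R⁻¹ ^ 2
  have hval (ω : ℝ) : ‖X.eval (Complex.exp (Complex.I * ω))‖ ^ 2 =
      D * (1 + R ^ K * R ^ K) - 2 * (D * R ^ K) * Real.cos (K * ω) := by
    rw [hX, sq_norm_eval_C_mul_prod_sub_exp hK0 hR0]
    ring
  have hdeg : X.natDegree ≤ K := by
    rw [hX]
    refine (natDegree_C_mul_le _ _).trans ((natDegree_prod_le _ _).trans ?_)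
    simp
  have henergy : D * (1 + R ^ K * R ^ K) = K + 1 :=
    hE ▸ (sum_sq_norm_coeff_eq_of_sq_norm_eval_exp hK0 hdeg hval).symm
  intro ω
  rw [hval, ← henergy, hηH, inv_pow]
  field_simp
  ring

/-- Huffman BMOCZ auto-correlation on the unit circle (Eq. (12)): every codeword of
the Huffman BMOCZ codebook (zeros at radii `R` or `R⁻¹` with phases `2πk/K`,
coefficient energy `K + 1`) satisfies
`|X_b(e^{iω})|² = (K + 1)(1 − 2η_H cos(Kω))` with `η_H = 1/(R^K + R^{−K})`. -/
theorem stmt_10 (K : ℕ) (hK : 1 ≤ K) (R : ℝ) (hR : 1 < R)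
    (ηH : ℝ) (hηH : ηH = 1 / (R ^ K + R⁻¹ ^ K))
    (b : Fin K → Bool) (c : ℝ) (hc : 0 < c)
    (X : Polynomial ℂ)
    (hX : X = Polynomial.C (c : ℂ) * ∏ k : Fin K,
      (Polynomial.X - Polynomial.C
        ((if b k then (R : ℂ) else (R : ℂ)⁻¹) *
          Complex.exp (2 * π * Complex.I * k / K))))
    (hE : ∑ j ∈ Finset.range (K + 1), ‖X.coeff j‖ ^ 2 = (K : ℝ) + 1) :
    ∀ ω : ℝ, ‖X.eval (Complex.exp (Complex.I * ω))‖ ^ 2 =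
      ((K : ℝ) + 1) * (1 - 2 * ηH * Real.cos (K * ω)) :=
  stmt_10_general K hK R hR ηH hηH b c X hX hE
end

section
/- Let K ≥ 2 be an integer and R > 1 a real, and set η_H := 1/(R^K + R^{-K}). Then: (i) 0 < η_H < 1/2; (ii) the supremum over ω ∈ [0, 2π) of the function ω ↦ (K+1)·(1 − 2η_H·cos(Kω)) equals (K+1)·(1 + 2η_H), attained at ω = π/K; and hence (iii) the ratio of this supremum to its mean value K+1, namely 1 + 2η_H, is strictly less than 2. -/
/-!
Since `R^K > 1`, the bound `R^K + R^{-K} > 2` (from `(x - 1)(1 - x⁻¹) > 0`) gives `η_H < 1/2`.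
With `2η_H ≥ 0`, the power `(K+1)(1 - 2η_H cos(Kω))` is largest where `cos(Kω) = -1`,
which happens at `ω = π/K ∈ [0, 2π)`, so the supremum is attained there.
-/

open Real

lemma one_div_pow_add_inv_pow_mem_Ioo {R : ℝ} (hR : 1 < R) {K : ℕ} (hK : K ≠ 0) :
    0 < 1 / (R ^ K + R⁻¹ ^ K) ∧ 1 / (R ^ K + R⁻¹ ^ K) < 1 / 2 := by
  have h := two_lt_add_inv_self (one_lt_pow₀ hR hK)
  rw [← inv_pow] at h
  exact ⟨by positivity, one_div_lt_one_div_of_lt two_pos h⟩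

lemma mul_one_sub_mul_cos_le {c b : ℝ} (hc : 0 ≤ c) (hb : 0 ≤ b) (θ : ℝ) :
    c * (1 - b * cos θ) ≤ c * (1 + b) := by
  have := neg_one_le_cos θ
  gcongr
  nlinarith

lemma isGreatest_image_mul_one_sub_mul_cos {K : ℕ} (hK : K ≠ 0) {c b : ℝ} (hc : 0 ≤ c)
    (hb : 0 ≤ b) :
    IsGreatest ((fun ω : ℝ => c * (1 - b * cos (K * ω))) '' Set.Ico 0 (2 * π))
      (c * (1 + b)) := by
  have hK₁ : (1 : ℝ) ≤ K := by exact_mod_cast Nat.one_le_iff_ne_zero.2 hK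
  refine ⟨⟨π / K, ⟨by positivity, ?_⟩, ?_⟩, ?_⟩
  · rw [div_lt_iff₀ (by positivity)]
    nlinarith [pi_pos]
  · simp only [mul_div_cancel₀ π (by positivity : (K : ℝ) ≠ 0), cos_pi]
    ring
  · rintro _ ⟨ω, -, rfl⟩
    exact mul_one_sub_mul_cos_le hc hb _

/-- PAPR of Huffman BMOCZ with frequency mapping (Eq. (33)): with
`η_H = 1/(R^K + R^{−K})` one has (i) `0 < η_H < 1/2`; (ii) the supremum over
`[0, 2π)` of `ω ↦ (K+1)(1 − 2η_H cos(Kω))` equals `(K+1)(1 + 2η_H)`, attained at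
`ω = π/K`; and (iii) the ratio `1 + 2η_H` of this supremum to the mean value `K+1`
is strictly less than `2`. -/
theorem stmt_11 (K : ℕ) (hK : 2 ≤ K) (R : ℝ) (hR : 1 < R)
    (ηH : ℝ) (hηH : ηH = 1 / (R ^ K + R⁻¹ ^ K)) :
    (0 < ηH ∧ ηH < 1 / 2) ∧
      (sSup ((fun ω : ℝ => ((K : ℝ) + 1) * (1 - 2 * ηH * Real.cos (K * ω))) ''
          Set.Ico (0 : ℝ) (2 * π)) = ((K : ℝ) + 1) * (1 + 2 * ηH) ∧
        ((K : ℝ) + 1) * (1 - 2 * ηH * Real.cos (K * (π / K))) =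
          ((K : ℝ) + 1) * (1 + 2 * ηH)) ∧
      1 + 2 * ηH < 2 := by
  have hK₀ : K ≠ 0 := by omega
  obtain ⟨hη₀, hη₁⟩ : 0 < ηH ∧ ηH < 1 / 2 := hηH ▸ one_div_pow_add_inv_pow_mem_Ioo hR hK₀
  have hmax := isGreatest_image_mul_one_sub_mul_cos hK₀ (c := (K : ℝ) + 1) (b := 2 * ηH)
    (by positivity) (by positivity)
  refine ⟨⟨hη₀, hη₁⟩, ⟨hmax.csSup_eq, ?_⟩, by linarith⟩
  rw [mul_div_cancel₀ π (by positivity), cos_pi]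
  ring
end

section
/- Let K ≥ 2 be an integer and let R > 1 and ζ > 0 be reals. For reals r > 0, s > 0 define coefficients c_k(r, s) := −s·r^K if k = 0, c_k(r, s) := (1 − s)·r^{K−k} if 1 ≤ k ≤ K−1, and c_K(r, s) := 1. Then −∑_{k=0}^{K} c_k(R, ζ)·c_{K−k}(R^{-1}, ζ^{-1}) = ζ·R^K + ζ^{-1}·R^{-K} − (1 − ζ)(1 − ζ^{-1})·(R^{K−1} − R^{-(K−1)})/(R − R^{-1}). -/
/-! The terms `k = 0` and `k = K` give `ζ R^K + ζ⁻¹ R^{-K}`; each middle term is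
`(1 - ζ)(1 - ζ⁻¹) R^{K-k} R^{-k}`, and since `R · R⁻¹ = 1` these form a geometric sum equal to
`(R^{K-1} - R^{-(K-1)}) / (R - R⁻¹)`. -/

open Finset

theorem geom_sum₂_mul_of_mul_eq_one {α : Type*} [CommRing α] {x y : α} (hxy : x * y = 1)
    (n : ℕ) : (∑ i ∈ range n, x ^ (n - i) * y ^ (i + 1)) * (x - y) = x ^ n - y ^ n := by
  have hterm : ∀ i ∈ range n, x ^ (n - i) * y ^ (i + 1) = y ^ i * x ^ (n - 1 - i) := by
    intro i hi
    rw [show n - i = n - 1 - i + 1 by have := mem_range.mp hi; omega]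
    linear_combination y ^ i * x ^ (n - 1 - i) * hxy
  rw [sum_congr rfl hterm]
  linear_combination -(geom_sum₂_mul y x n)

theorem stmt_13_general (K : ℕ) (hK : 2 ≤ K) (R ζ : ℝ) (hR : 1 < R)
    (c : ℕ → ℝ → ℝ → ℝ)
    (hc0 : ∀ r s : ℝ, c 0 r s = -s * r ^ K)
    (hcmid : ∀ k : ℕ, 1 ≤ k → k ≤ K - 1 → ∀ r s : ℝ, c k r s = (1 - s) * r ^ (K - k))
    (hcK : ∀ r s : ℝ, c K r s = 1) :
    -(∑ k ∈ Finset.range (K + 1), c k R ζ * c (K - k) R⁻¹ ζ⁻¹) =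
      ζ * R ^ K + ζ⁻¹ * R⁻¹ ^ K -
        (1 - ζ) * (1 - ζ⁻¹) * (R ^ (K - 1) - R⁻¹ ^ (K - 1)) / (R - R⁻¹) := by
  obtain ⟨n, rfl⟩ : ∃ n, K = n + 2 := ⟨K - 2, by omega⟩
  have hden : R - R⁻¹ ≠ 0 := (sub_pos.mpr ((inv_lt_one_of_one_lt₀ hR).trans hR)).ne'
  have hmid : ∀ i ∈ range (n + 1), c (i + 1) R ζ * c (n + 2 - (i + 1)) R⁻¹ ζ⁻¹ =
      (1 - ζ) * (1 - ζ⁻¹) * (R ^ (n + 1 - i) * R⁻¹ ^ (i + 1)) := by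
    intro i hi
    have hi := mem_range.mp hi
    rw [hcmid (i + 1) (by omega) (by omega), hcmid (n + 2 - (i + 1)) (by omega) (by omega),
      show n + 2 - (n + 2 - (i + 1)) = i + 1 by omega, show n + 2 - (i + 1) = n + 1 - i by omega]
    ring
  have hgeom : ∑ i ∈ range (n + 1), R ^ (n + 1 - i) * R⁻¹ ^ (i + 1) =
      (R ^ (n + 1) - R⁻¹ ^ (n + 1)) / (R - R⁻¹) :=
    eq_div_of_mul_eq hden (geom_sum₂_mul_of_mul_eq_one (mul_inv_cancel₀ (by positivity)) _)
  rw [sum_range_succ, sum_range_succ', sum_congr rfl hmid, ← mul_sum, hgeom, Nat.sub_self,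
    Nat.sub_zero, hc0, hcK, hcK, hc0, show n + 2 - 1 = n + 1 by omega]
  ring

/-- Eq. (20)–(22): the normalization constant of the jutted BMOCZ auto-correlation.
With `c_0(r,s) = −s·r^K`, `c_k(r,s) = (1−s)·r^{K−k}` for `1 ≤ k ≤ K−1`, and
`c_K(r,s) = 1`, one has
`−∑_{k=0}^{K} c_k(R,ζ)·c_{K−k}(R⁻¹,ζ⁻¹)
  = ζR^K + ζ⁻¹R^{−K} − (1−ζ)(1−ζ⁻¹)·(R^{K−1} − R^{−(K−1)})/(R − R⁻¹)`. -/
theorem stmt_13 (K : ℕ) (hK : 2 ≤ K) (R ζ : ℝ) (hR : 1 < R) (hζ : 0 < ζ)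
    (c : ℕ → ℝ → ℝ → ℝ)
    (hc0 : ∀ r s : ℝ, c 0 r s = -s * r ^ K)
    (hcmid : ∀ k : ℕ, 1 ≤ k → k ≤ K - 1 → ∀ r s : ℝ, c k r s = (1 - s) * r ^ (K - k))
    (hcK : ∀ r s : ℝ, c K r s = 1) :
    -(∑ k ∈ Finset.range (K + 1), c k R ζ * c (K - k) R⁻¹ ζ⁻¹) =
      ζ * R ^ K + ζ⁻¹ * R⁻¹ ^ K -
        (1 - ζ) * (1 - ζ⁻¹) * (R ^ (K - 1) - R⁻¹ ^ (K - 1)) / (R - R⁻¹) :=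
  stmt_13_general K hK R ζ hR c hc0 hcmid hcK
end
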